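/- Let S be a monoid and C a right S-act. Then: (a) C is InD-injective if and only if C has a zero element and for every indecomposable S-act B, every indecomposable subact A of B, and every homomorphism f : A → C, there is a homomorphism g : B → C extending f; (b) C is PInD-injective if and only if C has a zero element and for every indecomposable S-act B, every indecomposable subact A of B, and every injective homomorphism f : A → C, there is a homomorphism g : B → C extending f. -/
import Mathlib


universe u

/-- A right `S`-act structure on a nonempty type `A`: a right action of the monoid `S`. -/
class RightAct (S : Type u) [Monoid S] (A : Type u) : Type u where
  act : A → S → A
  act_one : ∀ a : A, act a 1 = a
  act_mul : ∀ (a : A) (s t : S), act (act a s) t = act a (s * t)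
  nonempty : Nonempty A

infixl:70 " ⊛ " => RightAct.act

/-- `S` is left reversible: every two right ideals (equiv. principal ones) intersect. -/
def LeftReversible (S : Type u) [Monoid S] : Prop :=
  ∀ a b : S, ∃ u v : S, a * u = b * v

/-- A left zero element of the monoid `S`. -/
def IsLeftZero (S : Type u) [Monoid S] (z : S) : Prop :=
  ∀ s : S, z * s = z

/-- `f : A → B` is a homomorphism of right `S`-acts. -/
def IsActHom (S : Type u) [Monoid S] {A B : Type u} [RightAct S A] [RightAct S B]
    (f : A → B) : Prop :=
  ∀ (a : A) (s : S), f (a ⊛ s) = f a ⊛ s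

/-- The restriction of `f : A → B` to the subset `C` is a homomorphism of right `S`-acts. -/
def IsActHomOn (S : Type u) [Monoid S] {A B : Type u} [RightAct S A] [RightAct S B]
    (f : A → B) (C : Set A) : Prop :=
  ∀ a ∈ C, ∀ s : S, f (a ⊛ s) = f a ⊛ s

/-- A subact: a nonempty subset closed under the action. -/
def IsSubact (S : Type u) [Monoid S] {A : Type u} [RightAct S A] (C : Set A) : Prop :=
  C.Nonempty ∧ ∀ a ∈ C, ∀ s : S, a ⊛ s ∈ C

/-- A zero element of an act: fixed by the action of every `s ∈ S`. -/
def IsZeroElem (S : Type u) [Monoid S] {A : Type u} [RightAct S A] (θ : A) : Prop :=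
  ∀ s : S, θ ⊛ s = θ

/-- A subset `D` (viewed as an act) is decomposable: it is the disjoint union of two
nonempty subacts. -/
def DecomposableSet (S : Type u) [Monoid S] {A : Type u} [RightAct S A] (D : Set A) : Prop :=
  ∃ B C : Set A, IsSubact S B ∧ IsSubact S C ∧ B ∪ C = D ∧ B ∩ C = ∅

/-- A subset (viewed as an act) is indecomposable. -/
def IndecomposableSet (S : Type u) [Monoid S] {A : Type u} [RightAct S A] (D : Set A) : Prop :=
  ¬ DecomposableSet S D

/-- The act `A` is decomposable. -/
def Decomposable (S : Type u) [Monoid S] (A : Type u) [RightAct S A] : Prop :=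
  DecomposableSet S (Set.univ : Set A)

/-- The act `A` is indecomposable. -/
def Indecomposable (S : Type u) [Monoid S] (A : Type u) [RightAct S A] : Prop :=
  ¬ Decomposable S A

/-- A cyclic act: generated by a single element. -/
def CyclicAct (S : Type u) [Monoid S] (A : Type u) [RightAct S A] : Prop :=
  ∃ a : A, ∀ x : A, ∃ s : S, x = a ⊛ s

/-- `A` is a retract of `B`. -/
def IsRetractOf (S : Type u) [Monoid S] (A B : Type u) [RightAct S A] [RightAct S B] : Prop :=
  ∃ (i : A → B) (p : B → A), IsActHom S i ∧ IsActHom S p ∧ ∀ a : A, p (i a) = a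

/-- `Q` is an injective act: every homomorphism from a subact `C` of any act `B` into `Q`
extends to `B`. -/
def ActInjective (S : Type u) [Monoid S] (Q : Type u) [RightAct S Q] : Prop :=
  ∀ (B : Type u) [RightAct S B], ∀ C : Set B, IsSubact S C →
    ∀ f : B → Q, IsActHomOn S f C →
      ∃ g : B → Q, IsActHom S g ∧ Set.EqOn g f C

/-- `Q` is InC-injective: injective relative to all embeddings into indecomposable acts. -/
def InCInjective (S : Type u) [Monoid S] (Q : Type u) [RightAct S Q] : Prop :=
  ∀ (B : Type u) [RightAct S B], Indecomposable S B → ∀ C : Set B, IsSubact S C →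
    ∀ f : B → Q, IsActHomOn S f C →
      ∃ g : B → Q, IsActHom S g ∧ Set.EqOn g f C

/-- `Q` is InD-injective: injective relative to all embeddings of indecomposable acts. -/
def InDInjective (S : Type u) [Monoid S] (Q : Type u) [RightAct S Q] : Prop :=
  ∀ (B : Type u) [RightAct S B], ∀ C : Set B, IsSubact S C → IndecomposableSet S C →
    ∀ f : B → Q, IsActHomOn S f C →
      ∃ g : B → Q, IsActHom S g ∧ Set.EqOn g f C

/-- `Q` is PInD-injective: every monomorphism from an indecomposable subact extends. -/
def PInDInjective (S : Type u) [Monoid S] (Q : Type u) [RightAct S Q] : Prop :=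
  ∀ (B : Type u) [RightAct S B], ∀ C : Set B, IsSubact S C → IndecomposableSet S C →
    ∀ f : B → Q, IsActHomOn S f C → Set.InjOn f C →
      ∃ g : B → Q, IsActHom S g ∧ Set.EqOn g f C

/-- `A` is quasi injective: homomorphisms from subacts of `A` to `A` extend to `A`. -/
def QuasiInjective (S : Type u) [Monoid S] (A : Type u) [RightAct S A] : Prop :=
  ∀ C : Set A, IsSubact S C → ∀ f : A → A, IsActHomOn S f C →
    ∃ g : A → A, IsActHom S g ∧ Set.EqOn g f C

/-- `A` is pseudo injective: monomorphisms from subacts of any act into `A` extend. -/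
def PseudoInjective (S : Type u) [Monoid S] (A : Type u) [RightAct S A] : Prop :=
  ∀ (C : Type u) [RightAct S C], ∀ B : Set C, IsSubact S B →
    ∀ f : C → A, IsActHomOn S f B → Set.InjOn f B →
      ∃ g : C → A, IsActHom S g ∧ Set.EqOn g f B

/-- A subact `Q` of `A` (viewed as an act in its own right) is injective. -/
def ActInjectiveSet (S : Type u) [Monoid S] {A : Type u} [RightAct S A] (Q : Set A) : Prop :=
  ∀ (B : Type u) [RightAct S B], ∀ C : Set B, IsSubact S C →
    ∀ f : B → A, IsActHomOn S f C → (∀ c ∈ C, f c ∈ Q) →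
      ∃ g : B → A, IsActHom S g ∧ (∀ b : B, g b ∈ Q) ∧ Set.EqOn g f C

/-- A subact `Q` of `A` (viewed as an act in its own right) is InD-injective. -/
def InDInjectiveSet (S : Type u) [Monoid S] {A : Type u} [RightAct S A] (Q : Set A) : Prop :=
  ∀ (B : Type u) [RightAct S B], ∀ C : Set B, IsSubact S C → IndecomposableSet S C →
    ∀ f : B → A, IsActHomOn S f C → (∀ c ∈ C, f c ∈ Q) →
      ∃ g : B → A, IsActHom S g ∧ (∀ b : B, g b ∈ Q) ∧ Set.EqOn g f C

/-- A subact `Q` of `A` (viewed as an act in its own right) is PInD-injective. -/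
def PInDInjectiveSet (S : Type u) [Monoid S] {A : Type u} [RightAct S A] (Q : Set A) : Prop :=
  ∀ (B : Type u) [RightAct S B], ∀ C : Set B, IsSubact S C → IndecomposableSet S C →
    ∀ f : B → A, IsActHomOn S f C → Set.InjOn f C → (∀ c ∈ C, f c ∈ Q) →
      ∃ g : B → A, IsActHom S g ∧ (∀ b : B, g b ∈ Q) ∧ Set.EqOn g f C

/-- The monoid `S` as a right act over itself, by multiplication. -/
instance selfAct (S : Type u) [Monoid S] : RightAct S S where
  act a s := a * s
  act_one := mul_one
  act_mul a s t := mul_assoc a s t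
  nonempty := ⟨1⟩

/-- `Q` is weakly injective: homomorphisms from right ideals of `S` into `Q` extend to `S`. -/
def WeaklyInjective (S : Type u) [Monoid S] (Q : Type u) [RightAct S Q] : Prop :=
  ∀ I : Set S, IsSubact S I → ∀ f : S → Q, IsActHomOn S f I →
    ∃ g : S → Q, IsActHom S g ∧ Set.EqOn g f I

/-- The relation whose equivalence closure has the indecomposable components as classes. -/
def ActRel (S : Type u) [Monoid S] {A : Type u} [RightAct S A] (a b : A) : Prop :=
  ∃ s : S, b = a ⊛ s

/-- The indecomposable component of the element `a` of an act. -/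
def ActComponent (S : Type u) [Monoid S] {A : Type u} [RightAct S A] (a : A) : Set A :=
  {b | Relation.EqvGen (ActRel S) a b}

section AuxLemmas

variable {S : Type u} [Monoid S]

/-- Cyclic (single-orbit) subsets are indecomposable. -/
lemma orbit_indecomposable {B : Type u} [RightAct S B] (c : B) :
    IndecomposableSet S {b | ∃ s : S, b = c ⊛ s} := by
  rintro ⟨P, Q, ⟨hPne, hPcl⟩, ⟨hQne, hQcl⟩, hun, hdis⟩
  have hc : c ∈ P ∪ Q := by
    rw [hun]; exact ⟨1, (RightAct.act_one c).symm⟩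
  rcases hc with hc | hc
  · obtain ⟨q, hq⟩ := hQne
    have hqA : q ∈ {b | ∃ s : S, b = c ⊛ s} := hun ▸ Set.mem_union_right _ hq
    obtain ⟨s, rfl⟩ := hqA
    exact Set.eq_empty_iff_forall_notMem.mp hdis _ ⟨hPcl c hc s, hq⟩
  · obtain ⟨p, hp⟩ := hPne
    have hpA : p ∈ {b | ∃ s : S, b = c ⊛ s} := hun ▸ Set.mem_union_left _ hp
    obtain ⟨s, rfl⟩ := hpA
    exact Set.eq_empty_iff_forall_notMem.mp hdis _ ⟨hp, hQcl c hc s⟩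

/-- The act `Option C`, adjoining a zero to `C`. -/
def optAct (S : Type u) [Monoid S] (C : Type u) [RightAct S C] : RightAct S (Option C) where
  act o s := o.map (· ⊛ s)
  act_one o := by cases o <;> simp [RightAct.act_one]
  act_mul o s t := by cases o <;> simp [RightAct.act_mul]
  nonempty := ⟨none⟩

/-- A PInD-injective act has a zero element. -/
lemma exists_zero_of_pind {C : Type u} [RightAct S C] (h : PInDInjective S C) :
    ∃ θ : C, IsZeroElem S θ := by
  obtain ⟨c₀⟩ := RightAct.nonempty (S := S) (A := C)
  letI := optAct S C
  have hact : ∀ (c : C) (s : S), (some c ⊛ s : Option C) = some (c ⊛ s) := fun _ _ => rfl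
  have hnone : ∀ s : S, (none ⊛ s : Option C) = none := fun _ => rfl
  set A : Set (Option C) := {b | ∃ s : S, b = some c₀ ⊛ s} with hAdef
  have hsub : IsSubact S A := by
    refine ⟨⟨some c₀ ⊛ 1, ⟨1, rfl⟩⟩, ?_⟩
    rintro a ⟨s, rfl⟩ t
    exact ⟨s * t, RightAct.act_mul _ _ _⟩
  have hind : IndecomposableSet S A := orbit_indecomposable (some c₀)
  have hfh : IsActHomOn S (fun o : Option C => o.getD c₀) A := by
    rintro a ⟨s, rfl⟩ t
    simp [hact]
  have hinj : Set.InjOn (fun o : Option C => o.getD c₀) A := by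
    rintro a ⟨s, rfl⟩ b ⟨t, rfl⟩ hab
    simpa [hact] using hab
  obtain ⟨g, hg, -⟩ := h (Option C) A hsub hind _ hfh hinj
  refine ⟨g none, fun s => ?_⟩
  have := hg none s
  rw [hnone] at this
  exact this.symm

lemma mem_comp_act {B : Type u} [RightAct S B] {a b : B}
    (h : b ∈ ActComponent S a) (s : S) : b ⊛ s ∈ ActComponent S a :=
  Relation.EqvGen.trans _ _ _ h (Relation.EqvGen.rel _ _ ⟨s, rfl⟩)

lemma mem_comp_of_act {B : Type u} [RightAct S B] {a b : B} {s : S}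
    (h : b ⊛ s ∈ ActComponent S a) : b ∈ ActComponent S a :=
  Relation.EqvGen.trans _ _ _ h (Relation.EqvGen.symm _ _ (Relation.EqvGen.rel _ _ ⟨s, rfl⟩))

/-- An indecomposable subact lies in the component of any of its elements. -/
lemma subset_component {B : Type u} [RightAct S B] {A : Set B} (hA : IsSubact S A)
    (hind : IndecomposableSet S A) {a : B} (ha : a ∈ A) : A ⊆ ActComponent S a := by
  by_contra h
  obtain ⟨b, hbA, hbK⟩ := Set.not_subset.mp h
  apply hind
  refine ⟨A ∩ ActComponent S a, A \ ActComponent S a,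
    ⟨⟨a, ha, Relation.EqvGen.refl a⟩, ?_⟩, ⟨⟨b, hbA, hbK⟩, ?_⟩, ?_, ?_⟩
  · rintro x ⟨hxA, hxK⟩ s
    exact ⟨hA.2 x hxA s, mem_comp_act hxK s⟩
  · rintro x ⟨hxA, hxK⟩ s
    exact ⟨hA.2 x hxA s, fun hk => hxK (mem_comp_of_act hk)⟩
  · exact Set.inter_union_diff A _
  · ext x
    simp only [Set.mem_inter_iff, Set.mem_diff, Set.mem_empty_iff_false, iff_false]
    tauto

/-- Components are indecomposable. -/
lemma component_indecomposable {B : Type u} [RightAct S B] (a : B) :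
    IndecomposableSet S (ActComponent S a) := by
  rintro ⟨P, Q, ⟨hPne, hPcl⟩, ⟨hQne, hQcl⟩, hun, hdis⟩
  set K := ActComponent S a with hK
  have hdis' : ∀ x : B, x ∈ P → x ∈ Q → False := fun x h1 h2 =>
    Set.eq_empty_iff_forall_notMem.mp hdis x ⟨h1, h2⟩
  have key : ∀ x y : B, Relation.EqvGen (ActRel S) x y →
      (x ∈ K ↔ y ∈ K) ∧ (x ∈ K → (x ∈ P ↔ y ∈ P)) := by
    intro x y h
    induction h with
    | rel x y hxy =>
      obtain ⟨s, rfl⟩ := hxy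
      refine ⟨⟨fun h => mem_comp_act h s, fun h => mem_comp_of_act h⟩, fun hxK => ?_⟩
      constructor
      · exact fun hxP => hPcl x hxP s
      · intro hyP
        have hxPQ : x ∈ P ∪ Q := hun ▸ hxK
        rcases hxPQ with hxP | hxQ
        · exact hxP
        · exact absurd (hQcl x hxQ s) (fun h => hdis' _ hyP h)
    | refl x => exact ⟨Iff.rfl, fun _ => Iff.rfl⟩
    | symm x y h ih =>
      refine ⟨ih.1.symm, fun hyK => ?_⟩
      exact (ih.2 (ih.1.mpr hyK)).symm
    | trans x y z h1 h2 ih1 ih2 =>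
      refine ⟨ih1.1.trans ih2.1, fun hxK => ?_⟩
      exact (ih1.2 hxK).trans (ih2.2 (ih1.1.mp hxK))
  have haK : a ∈ K := Relation.EqvGen.refl a
  have haPQ : a ∈ P ∪ Q := hun ▸ haK
  rcases haPQ with haP | haQ
  · obtain ⟨q, hq⟩ := hQne
    have hqK : q ∈ K := hun ▸ Set.mem_union_right _ hq
    have : q ∈ P := ((key a q hqK).2 haK).mp haP
    exact hdis' q this hq
  · obtain ⟨p, hp⟩ := hPne
    have hpK : p ∈ K := hun ▸ Set.mem_union_left _ hp
    have : a ∈ P := ((key a p hpK).2 haK).mpr hp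
    exact hdis' a this haQ

/-- A subact viewed as an act. -/
def subAct (S : Type u) [Monoid S] {B : Type u} [RightAct S B] (K : Set B)
    (hcl : ∀ b ∈ K, ∀ s : S, b ⊛ s ∈ K) (hne : K.Nonempty) : RightAct S ↥K where
  act x s := ⟨x.1 ⊛ s, hcl _ x.2 s⟩
  act_one x := Subtype.ext (RightAct.act_one _)
  act_mul x s t := Subtype.ext (RightAct.act_mul _ _ _)
  nonempty := hne.to_subtype

/-- Decomposability transfers along the inclusion of a subact. -/
lemma image_decomposable {B : Type u} [RightAct S B] (K : Set B) [inst : RightAct S ↥K]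
    (compat : ∀ (x : ↥K) (s : S), ((x ⊛ s : ↥K) : B) = (x : B) ⊛ s)
    {D : Set ↥K} (h : DecomposableSet S D) :
    DecomposableSet S (Subtype.val '' D : Set B) := by
  obtain ⟨P, Q, ⟨hPne, hPcl⟩, ⟨hQne, hQcl⟩, hun, hdis⟩ := h
  refine ⟨Subtype.val '' P, Subtype.val '' Q, ⟨hPne.image _, ?_⟩, ⟨hQne.image _, ?_⟩, ?_, ?_⟩
  · rintro b ⟨x, hx, rfl⟩ s
    exact ⟨x ⊛ s, hPcl x hx s, compat x s⟩
  · rintro b ⟨x, hx, rfl⟩ s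
    exact ⟨x ⊛ s, hQcl x hx s, compat x s⟩
  · rw [← Set.image_union, hun]
  · rw [← Set.image_inter Subtype.val_injective, hdis, Set.image_empty]

/-- Glue an extension on a "saturated" subact with the zero elsewhere. -/
lemma glue_extension {C : Type u} [RightAct S C] {θ : C} (hθ : IsZeroElem S θ)
    {B : Type u} [RightAct S B] (K : Set B)
    (h1 : ∀ b ∈ K, ∀ s : S, b ⊛ s ∈ K) (h2 : ∀ (b : B) (s : S), b ⊛ s ∈ K → b ∈ K)
    [inst : RightAct S ↥K]
    (compat : ∀ (x : ↥K) (s : S), ((x ⊛ s : ↥K) : B) = (x : B) ⊛ s)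
    (A : Set B) (hAK : A ⊆ K) (f : B → C)
    (g' : ↥K → C) (hg' : IsActHom S g') (heq : ∀ x : ↥K, (x : B) ∈ A → g' x = f x) :
    ∃ g : B → C, IsActHom S g ∧ Set.EqOn g f A := by
  classical
  refine ⟨fun b => if h : b ∈ K then g' ⟨b, h⟩ else θ, ?_, ?_⟩
  · intro b s
    dsimp only
    by_cases hb : b ∈ K
    · have hbs : b ⊛ s ∈ K := h1 b hb s
      rw [dif_pos hb, dif_pos hbs]
      have hval : (⟨b, hb⟩ ⊛ s : ↥K) = ⟨b ⊛ s, hbs⟩ := Subtype.ext (compat _ _)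
      rw [← hval]
      exact hg' ⟨b, hb⟩ s
    · have hbs : b ⊛ s ∉ K := fun h => hb (h2 b s h)
      rw [dif_neg hb, dif_neg hbs]
      exact (hθ s).symm
  · intro a ha
    have haK : a ∈ K := hAK ha
    simp only [dif_pos haK]
    exact heq ⟨a, haK⟩ ha

end AuxLemmas

/-- `C` is InD-injective (resp. PInD-injective) iff `C` has a zero and
every homomorphism (resp. monomorphism) from an indecomposable subact of an
indecomposable act `B` into `C` extends to `B`. -/
theorem inDInjective_criterion (S : Type u) [Monoid S] (C : Type u) [RightAct S C] :
    (InDInjective S C ↔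
      (∃ θ : C, IsZeroElem S θ) ∧
      ∀ (B : Type u) [RightAct S B], Indecomposable S B →
        ∀ A : Set B, IsSubact S A → IndecomposableSet S A →
          ∀ f : B → C, IsActHomOn S f A →
            ∃ g : B → C, IsActHom S g ∧ Set.EqOn g f A) ∧
    (PInDInjective S C ↔
      (∃ θ : C, IsZeroElem S θ) ∧
      ∀ (B : Type u) [RightAct S B], Indecomposable S B →
        ∀ A : Set B, IsSubact S A → IndecomposableSet S A →
          ∀ f : B → C, IsActHomOn S f A → Set.InjOn f A →
            ∃ g : B → C, IsActHom S g ∧ Set.EqOn g f A) := by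
  have toPInD : InDInjective S C → PInDInjective S C :=
    fun h B _ A hA hind f hf _ => h B A hA hind f hf
  constructor
  · constructor
    · intro h
      refine ⟨exists_zero_of_pind (toPInD h), ?_⟩
      intro B _ _ A hA hind f hf
      exact h B A hA hind f hf
    · rintro ⟨⟨θ, hθ⟩, H⟩
      intro B instB A hA hind f hf
      obtain ⟨a, ha⟩ := hA.1
      set K := ActComponent S a with hKdef
      have hAK : A ⊆ K := subset_component hA hind ha
      have h1 : ∀ b ∈ K, ∀ s : S, b ⊛ s ∈ K := fun b hb s => mem_comp_act hb s
      have h2 : ∀ (b : B) (s : S), b ⊛ s ∈ K → b ∈ K := fun b s h => mem_comp_of_act h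
      letI instK : RightAct S ↥K := subAct S K h1 ⟨a, Relation.EqvGen.refl a⟩
      have compat : ∀ (x : ↥K) (s : S), ((x ⊛ s : ↥K) : B) = (x : B) ⊛ s := fun _ _ => rfl
      have hKindec : Indecomposable S ↥K := by
        intro hdec
        have h3 := image_decomposable K compat hdec
        rw [Set.image_univ, Subtype.range_coe] at h3
        exact component_indecomposable a h3
      set A' : Set ↥K := Subtype.val ⁻¹' A with hA'def
      have hA'sub : IsSubact S A' := by
        refine ⟨⟨⟨a, Relation.EqvGen.refl a⟩, ha⟩, ?_⟩
        intro x hx s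
        show ((x ⊛ s : ↥K) : B) ∈ A
        rw [compat]
        exact hA.2 _ hx s
      have hA'ind : IndecomposableSet S A' := by
        intro hdec
        have h3 := image_decomposable K compat hdec
        rw [Set.image_preimage_eq_inter_range, Subtype.range_coe,
          Set.inter_eq_self_of_subset_left hAK] at h3
        exact hind h3
      have hf' : IsActHomOn S (fun x : ↥K => f x) A' := by
        intro x hx s
        show f ((x ⊛ s : ↥K) : B) = f x ⊛ s
        rw [compat]
        exact hf _ hx s
      obtain ⟨g', hg', hgeq⟩ := H (↥K) hKindec A' hA'sub hA'ind _ hf'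
      exact glue_extension hθ K h1 h2 compat A hAK f g' hg' (fun x hx => hgeq hx)
  · constructor
    · intro h
      refine ⟨exists_zero_of_pind h, ?_⟩
      intro B _ _ A hA hind f hf hinj
      exact h B A hA hind f hf hinj
    · rintro ⟨⟨θ, hθ⟩, H⟩
      intro B instB A hA hind f hf hinj
      obtain ⟨a, ha⟩ := hA.1
      set K := ActComponent S a with hKdef
      have hAK : A ⊆ K := subset_component hA hind ha
      have h1 : ∀ b ∈ K, ∀ s : S, b ⊛ s ∈ K := fun b hb s => mem_comp_act hb s
      have h2 : ∀ (b : B) (s : S), b ⊛ s ∈ K → b ∈ K := fun b s h => mem_comp_of_act h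
      letI instK : RightAct S ↥K := subAct S K h1 ⟨a, Relation.EqvGen.refl a⟩
      have compat : ∀ (x : ↥K) (s : S), ((x ⊛ s : ↥K) : B) = (x : B) ⊛ s := fun _ _ => rfl
      have hKindec : Indecomposable S ↥K := by
        intro hdec
        have h3 := image_decomposable K compat hdec
        rw [Set.image_univ, Subtype.range_coe] at h3
        exact component_indecomposable a h3
      set A' : Set ↥K := Subtype.val ⁻¹' A with hA'def
      have hA'sub : IsSubact S A' := by
        refine ⟨⟨⟨a, Relation.EqvGen.refl a⟩, ha⟩, ?_⟩
        intro x hx s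
        show ((x ⊛ s : ↥K) : B) ∈ A
        rw [compat]
        exact hA.2 _ hx s
      have hA'ind : IndecomposableSet S A' := by
        intro hdec
        have h3 := image_decomposable K compat hdec
        rw [Set.image_preimage_eq_inter_range, Subtype.range_coe,
          Set.inter_eq_self_of_subset_left hAK] at h3
        exact hind h3
      have hf' : IsActHomOn S (fun x : ↥K => f x) A' := by
        intro x hx s
        show f ((x ⊛ s : ↥K) : B) = f x ⊛ s
        rw [compat]
        exact hf _ hx s
      have hinj' : Set.InjOn (fun x : ↥K => f x) A' :=
        fun x hx y hy hxy => Subtype.ext (hinj hx hy hxy)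
      obtain ⟨g', hg', hgeq⟩ := H (↥K) hKindec A' hA'sub hA'ind _ hf' hinj'
      exact glue_extension hθ K h1 h2 compat A hAK f g' hg' (fun x hx => hgeq hx)
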